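/- Let T ∈ V₁ be such that q(T) ∉ {q₀(v) : v ∈ V₀}. Then the orthogonal complement of T in V₁, namely {v ∈ V₁ : B(v, T) = 0}, is anisotropic. -/
import Mathlib


open CliffordAlgebra QuadraticMap

noncomputable section

/-- The hyperbolic plane quadratic form `Q (a, b) = a * b` on `F × F`. -/
def hypForm (F : Type*) [Field F] : QuadraticForm F (F × F) :=
  QuadraticMap.linMulLin (LinearMap.fst F F F) (LinearMap.snd F F F)

/-- The quadratic form on `V₁ = F e₂ ⊕ V₀ ⊕ F f₂`, realized as `(F × F) × V₀` with the first
factor a hyperbolic plane. -/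
def QOne {F : Type*} [Field F] {V₀ : Type*} [AddCommGroup V₀] [Module F V₀]
    (q₀ : QuadraticForm F V₀) : QuadraticForm F ((F × F) × V₀) :=
  (hypForm F).prod q₀

end

/-- Let `(V₀, q₀)` be nondegenerate and anisotropic and
`V₁ = F e₂ ⊕ V₀ ⊕ F f₂`.  If `T ∈ V₁` has `q(T) ∉ q₀(V₀)`, then the orthogonal complement of `T`
in `V₁` is anisotropic. -/
theorem statement16
    {F : Type*} [Field F] (hchar : (2 : F) ≠ 0)
    {V₀ : Type*} [AddCommGroup V₀] [Module F V₀] [FiniteDimensional F V₀]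
    (q₀ : QuadraticForm F V₀)
    (hnd : (QuadraticMap.polarBilin q₀).Nondegenerate)
    (han : q₀.Anisotropic)
    (T : (F × F) × V₀)
    (hT : QOne q₀ T ∉ Set.range ⇑q₀) :
    ∀ v : (F × F) × V₀,
      QuadraticMap.polar (QOne q₀) v T = 0 → QOne q₀ v = 0 → v = 0 := by
  obtain ⟨⟨t1, t2⟩, t0⟩ := T
  rintro ⟨⟨a, b⟩, w⟩ hpol hq
  simp only [QOne, hypForm, QuadraticMap.polar, QuadraticMap.prod_apply,
    QuadraticMap.linMulLin_apply, Prod.fst_add, Prod.snd_add, Prod.mk_add_mk,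
    LinearMap.fst_apply, LinearMap.snd_apply, Set.mem_range, not_exists] at hpol hq hT
  set P := QuadraticMap.polar q₀ w t0 with hPdef
  have hPe : q₀ (w + t0) = q₀ w + q₀ t0 + P := by rw [hPdef]; simp [QuadraticMap.polar]
  rw [hPe] at hpol
  have hpol' : a * t2 + b * t1 + P = 0 := by linear_combination hpol
  have ht1 : t1 ≠ 0 := by
    intro h
    exact hT t0 (by rw [h, zero_mul, zero_add])
  by_cases ha : a = 0
  · have hw : w = 0 := han w (by rw [ha, zero_mul, zero_add] at hq; exact hq)
    have hb : b = 0 := by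
      have hP0 : P = 0 := by simp [hPdef, hw]
      have : b * t1 = 0 := by rw [ha] at hpol'; linear_combination hpol' - hP0
      exact (mul_eq_zero.mp this).resolve_right ht1
    simp [ha, hb, hw]
  · exfalso
    apply hT (t0 - (t1 / a) • w)
    set c := t1 / a with hc
    clear_value c
    have hca : c * a = t1 := by rw [hc]; exact div_mul_cancel₀ _ ha
    have key : q₀ (t0 - c • w) = q₀ t0 + c * c * q₀ w - c * P := by
      rw [sub_eq_add_neg, ← neg_smul]
      have h1 : q₀ (t0 + (-c) • w)
          = q₀ t0 + q₀ ((-c) • w) + QuadraticMap.polar q₀ t0 ((-c) • w) := by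
        simp [QuadraticMap.polar]
      rw [h1, QuadraticMap.map_smul, QuadraticMap.polar_smul_right,
        QuadraticMap.polar_comm, ← hPdef]
      simp only [smul_eq_mul]
      ring
    rw [key]
    linear_combination c * c * hq - c * hpol' + (t2 - c * b) * hca
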